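/- Corollary 2.3: let M ≥ m > 0 and x, y, z ∈ X with Re(My − x, x − my | z) ≥ 0. Then ‖x|z‖‖y|z‖ ≤ (1/2)·((M + m)/√(mM))·Re(x, y | z) ≤ (1/2)·((M + m)/√(mM))·|(x, y | z)|. -/
import Mathlib


open RCLike

/-- A 2-inner product space over `𝕜 = ℝ` or `ℂ`. -/
structure TwoIP (𝕜 : Type) (X : Type) [RCLike 𝕜] [AddCommGroup X] [Module 𝕜 X] where
  ip : X → X → X → 𝕜
  re_nonneg : ∀ x z : X, 0 ≤ re (ip x x z)
  im_zero : ∀ x z : X, im (ip x x z) = 0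
  eq_zero_iff : ∀ x z : X, ip x x z = 0 ↔ ¬ LinearIndependent 𝕜 ![x, z]
  swap : ∀ x z : X, ip x x z = ip z z x
  conj_symm : ∀ x y z : X, ip x y z = (starRingEnd 𝕜) (ip y x z)
  smul_left : ∀ (α : 𝕜) (x y z : X), ip (α • x) y z = α * ip x y z
  add_left : ∀ x x' y z : X, ip (x + x') y z = ip x y z + ip x' y z

lemma TwoIP.sub_left {𝕜 X : Type} [RCLike 𝕜] [AddCommGroup X] [Module 𝕜 X]
    (T : TwoIP 𝕜 X) (u v w z : X) : T.ip (u - v) w z = T.ip u w z - T.ip v w z := by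
  have : u - v = u + (-1 : 𝕜) • v := by
    rw [neg_one_smul]; abel
  rw [this, T.add_left, T.smul_left]; ring

lemma TwoIP.sub_right {𝕜 X : Type} [RCLike 𝕜] [AddCommGroup X] [Module 𝕜 X]
    (T : TwoIP 𝕜 X) (u v w z : X) : T.ip u (v - w) z = T.ip u v z - T.ip u w z := by
  rw [T.conj_symm u (v - w), T.sub_left, map_sub, ← T.conj_symm, ← T.conj_symm]

lemma TwoIP.smul_right {𝕜 X : Type} [RCLike 𝕜] [AddCommGroup X] [Module 𝕜 X]
    (T : TwoIP 𝕜 X) (α : 𝕜) (u v z : X) :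
    T.ip u (α • v) z = (starRingEnd 𝕜) α * T.ip u v z := by
  rw [T.conj_symm u (α • v), T.smul_left, map_mul, ← T.conj_symm]

theorem stmt {𝕜 X : Type} [RCLike 𝕜] [AddCommGroup X] [Module 𝕜 X]
    (T : TwoIP 𝕜 X) (hdim : 1 < Module.rank 𝕜 X) (x y z : X) (m M : ℝ) (hm : 0 < m) (hM : m ≤ M)
    (h : 0 ≤ re (T.ip (((M : ℝ) : 𝕜) • y - x) (x - ((m : ℝ) : 𝕜) • y) z)) :
    Real.sqrt (re (T.ip x x z)) * Real.sqrt (re (T.ip y y z))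
      ≤ (1/2) * ((M + m) / Real.sqrt (m * M)) * re (T.ip x y z) ∧
    (1/2) * ((M + m) / Real.sqrt (m * M)) * re (T.ip x y z)
      ≤ (1/2) * ((M + m) / Real.sqrt (m * M)) * ‖T.ip x y z‖ := by
  set a := re (T.ip x x z) with ha
  set b := re (T.ip y y z) with hb
  set c := re (T.ip x y z) with hc
  have hMpos : 0 < M := lt_of_lt_of_le hm hM
  have hrevx : re (T.ip y x z) = c := by
    rw [hc, T.conj_symm x y z, conj_re]
  have hexp : re (T.ip (((M : ℝ) : 𝕜) • y - x) (x - ((m : ℝ) : 𝕜) • y) z)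
      = (M + m) * c - a - m * M * b := by
    simp only [T.sub_left, T.sub_right, T.smul_left, T.smul_right, conj_ofReal, map_sub,
      mul_re, ofReal_re, ofReal_im, zero_mul, sub_zero]
    rw [hrevx]
    ring
  rw [hexp] at h
  have hanneg : 0 ≤ a := T.re_nonneg x z
  have hbnneg : 0 ≤ b := T.re_nonneg y z
  set sa := Real.sqrt a with hsa
  set sb := Real.sqrt b with hsb
  set s := Real.sqrt (m * M) with hs
  have hsa2 : sa ^ 2 = a := Real.sq_sqrt hanneg
  have hsb2 : sb ^ 2 = b := Real.sq_sqrt hbnneg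
  have hs2 : s ^ 2 = m * M := Real.sq_sqrt (by positivity)
  have hspos : 0 < s := Real.sqrt_pos.mpr (by positivity)
  have hsanneg : 0 ≤ sa := Real.sqrt_nonneg _
  have hsbnneg : 0 ≤ sb := Real.sqrt_nonneg _
  have key : 2 * s * (sa * sb) ≤ (M + m) * c := by
    nlinarith [sq_nonneg (sa - s * sb)]
  constructor
  · have heq : (1/2) * ((M + m) / s) * c = ((M + m) * c) / (2 * s) := by
      field_simp
    rw [heq, le_div_iff₀ (by positivity)]
    nlinarith
  · apply mul_le_mul_of_nonneg_left (re_le_norm _)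
    have hc0 : 0 ≤ c := by nlinarith
    positivity
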